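/- Let f : ℝ → ℝ be continuously differentiable with f′(t) ≠ 0 for all t ∈ ℝ, and consider the nonsaturating Dirac-GAN gradient vector field v(θ, ψ) = (−f′(−θψ)ψ, f′(θψ)θ). Then (θ, ψ) = (0, 0) is the unique zero of v, and the Jacobian matrix of v at (0, 0) equals [[0, −f′(0)], [f′(0), 0]], whose complex eigenvalues are ±f′(0)·i, both on the imaginary axis. -/
import Mathlib


open Matrix

/-- The nonsaturating Dirac-GAN gradient vector field
`v(θ, ψ) = (−f′(−θψ)ψ, f′(θψ)θ)` has `(0, 0)` as its unique zero, its Jacobian at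
`(0,0)` is `[[0, −f′(0)], [f′(0), 0]]`, and the complex eigenvalues of that Jacobian
are `±f′(0)·i`, both purely imaginary. -/
theorem nonsaturating_dirac_gan_eigenvalues
    (f : ℝ → ℝ) (hf : ContDiff ℝ 1 f) (hf' : ∀ t : ℝ, deriv f t ≠ 0)
    (v : (Fin 2 → ℝ) → (Fin 2 → ℝ))
    (hv : ∀ x : Fin 2 → ℝ,
      v x = ![-(deriv f (-(x 0 * x 1))) * x 1, deriv f (x 0 * x 1) * x 0]) :
    (∀ x : Fin 2 → ℝ, v x = 0 ↔ x = 0) ∧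
    HasFDerivAt v
      (LinearMap.toContinuousLinearMap
        (Matrix.toLin' (!![0, -(deriv f 0); deriv f 0, 0] : Matrix (Fin 2) (Fin 2) ℝ)))
      0 ∧
    spectrum ℂ
        ((!![0, -(deriv f 0); deriv f 0, 0] : Matrix (Fin 2) (Fin 2) ℝ).map Complex.ofReal)
      = {Complex.ofReal (deriv f 0) * Complex.I,
         -(Complex.ofReal (deriv f 0) * Complex.I)} ∧
    (∀ lam ∈ spectrum ℂ
        ((!![0, -(deriv f 0); deriv f 0, 0] : Matrix (Fin 2) (Fin 2) ℝ).map Complex.ofReal),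
      lam.re = 0) := by
  set c := deriv f 0 with hc
  have hv0 : v 0 = 0 := by simp [hv 0]
  -- spectrum computation
  have hspec : spectrum ℂ ((!![0, -c; c, 0] : Matrix (Fin 2) (Fin 2) ℝ).map Complex.ofReal)
      = {Complex.ofReal c * Complex.I, -(Complex.ofReal c * Complex.I)} := by
    ext lam
    rw [spectrum.mem_iff, Matrix.isUnit_iff_isUnit_det, isUnit_iff_ne_zero, not_not]
    simp only [Matrix.det_fin_two, Matrix.algebraMap_matrix_apply, Matrix.map_apply,
      Matrix.sub_apply]
    norm_num [Matrix.one_apply]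
    constructor
    · intro h
      have h2 : (lam - (c:ℂ) * Complex.I) * (lam + (c:ℂ) * Complex.I) = 0 := by
        linear_combination h - (c:ℂ)^2 * Complex.I_sq
      rcases mul_eq_zero.1 h2 with h | h
      · left; linear_combination h
      · right; linear_combination h
    · rintro (rfl | rfl) <;> linear_combination ((c:ℂ)^2) * Complex.I_sq
  refine ⟨?_, ?_, hspec, ?_⟩
  · -- unique zero
    intro x
    constructor
    · intro hx
      rw [hv x] at hx
      have h0 : -(deriv f (-(x 0 * x 1))) * x 1 = 0 := congrFun hx 0
      have h1 : deriv f (x 0 * x 1) * x 0 = 0 := congrFun hx 1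
      have hx1 : x 1 = 0 := by
        rcases mul_eq_zero.1 h0 with h | h
        · exact absurd (neg_eq_zero.1 h) (hf' _)
        · exact h
      have hx0 : x 0 = 0 := by
        rcases mul_eq_zero.1 h1 with h | h
        · exact absurd h (hf' _)
        · exact h
      funext i
      fin_cases i <;> assumption
    · rintro rfl; exact hv0
  · -- derivative
    rw [hasFDerivAt_iff_isLittleO_nhds_zero, Asymptotics.isLittleO_iff]
    intro ε hε
    have hcont : ContinuousAt (deriv f) 0 := (hf.continuous_deriv le_rfl).continuousAt
    rw [Metric.continuousAt_iff] at hcont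
    obtain ⟨δ, hδ, hδ'⟩ := hcont ε hε
    have : ∀ᶠ h : Fin 2 → ℝ in nhds 0, ‖h‖ < min δ 1 := by
      have := Metric.ball_mem_nhds (0 : Fin 2 → ℝ) (lt_min hδ one_pos)
      filter_upwards [this] with h hh
      simpa [dist_eq_norm] using hh
    filter_upwards [this] with h hh
    have h0 : |h 0| ≤ ‖h‖ := by simpa using norm_le_pi_norm h 0
    have h1 : |h 1| ≤ ‖h‖ := by simpa using norm_le_pi_norm h 1
    have hprod : |h 0 * h 1| < δ := by
      rw [abs_mul]
      calc |h 0| * |h 1| ≤ ‖h‖ * 1 := by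
            apply mul_le_mul h0 (h1.trans (le_of_lt (lt_of_lt_of_le hh (min_le_right _ _))))
              (abs_nonneg _) (norm_nonneg _)
        _ < δ := by simpa using lt_of_lt_of_le hh (min_le_left _ _)
    have key : ∀ t : ℝ, |t| < δ → |deriv f t - c| ≤ ε := by
      intro t ht
      have := hδ' (show dist t 0 < δ by simpa [Real.dist_eq] using ht)
      rw [Real.dist_eq] at this
      exact this.le
    rw [pi_norm_le_iff_of_nonneg (by positivity)]
    intro i
    have hL : ∀ y : Fin 2 → ℝ,
        (Matrix.toLin' (!![0, -c; c, 0] : Matrix (Fin 2) (Fin 2) ℝ)) y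
          = ![-c * y 1, c * y 0] := by
      intro y
      ext i
      fin_cases i <;>
        simp [Matrix.toLin'_apply, Matrix.mulVec, dotProduct, Fin.sum_univ_two]
    fin_cases i <;>
      simp only [hv, hv0, hL, Pi.sub_apply, Pi.zero_apply, LinearMap.coe_toContinuousLinearMap',
        Fin.mk_zero, Fin.mk_one, Fin.isValue,
        Matrix.cons_val_zero, Matrix.cons_val_one, Matrix.head_cons, zero_add, sub_zero,
        mul_zero, zero_mul, neg_zero, Real.norm_eq_abs]
    · have : -(deriv f (-(h 0 * h 1))) * h 1 - -c * h 1 = (c - deriv f (-(h 0 * h 1))) * h 1 := by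
        ring
      rw [this, abs_mul]
      have := key (-(h 0 * h 1)) (by simpa using hprod)
      calc |c - deriv f (-(h 0 * h 1))| * |h 1| ≤ ε * ‖h‖ := by
            apply mul_le_mul _ h1 (abs_nonneg _) hε.le
            rw [abs_sub_comm]; exact this
        _ = ε * ‖h‖ := rfl
    · have : deriv f (h 0 * h 1) * h 0 - c * h 0 = (deriv f (h 0 * h 1) - c) * h 0 := by ring
      rw [this, abs_mul]
      exact mul_le_mul (key _ hprod) h0 (abs_nonneg _) hε.le
  · -- purely imaginary
    intro lam hlam
    rw [hspec] at hlam
    rcases hlam with rfl | rfl <;> simp
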